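/- For D > 0 define f̄(t) = t on [0, 3D/4] and f̄(t) = 3D/2 − t on [3D/4, 9D/4]; define ḡ(t) = t on [0, D/4], ḡ(t) = D/2 − t on [D/4, 3D/2], with Player II dropping a gift at time τ = D/4 at position ḡ(D/4) = D/4 (relative to his start). Then in the one-gift game the four termination times (the earlier of meeting agent i or Player I finding agent i's dropped gift) are 3D/4, 3D/4, 3D/2, 9D/4, so the expected termination time is (3D/4 + 3D/4 + 3D/2 + 9D/4)/4 = 21D/16. -/
import Mathlib


/-- Termination time in the one-gift game `G₁` against the agent of Player II
with path `s₁ * D + s₂ * g t` (in Player I's coordinates): the first time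
Player I meets the agent or (after the dropoff time `τ`) reaches the gift,
which sits at the agent's time-`τ` position `s₁ * D + s₂ * g τ`. -/
noncomputable def termG1 (D : ℝ) (f g : ℝ → ℝ) (τ s₁ s₂ : ℝ) : ℝ :=
  sInf {t : ℝ | 0 ≤ t ∧ (f t = s₁ * D + s₂ * g t ∨ (τ ≤ t ∧ f t = s₁ * D + s₂ * g τ))}

/-- Player I's path: forward until `3D/4`, then backward. -/
noncomputable def fb (D : ℝ) : ℝ → ℝ := fun t => if t ≤ 3 * D / 4 then t else 3 * D / 2 - t

/-- Player II's path: forward until `D/4` (where the gift is dropped), then backward. -/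
noncomputable def gb (D : ℝ) : ℝ → ℝ := fun t => if t ≤ D / 4 then t else D / 2 - t

/-- In `G₁` with `f̄ = [3D/4]`, `ḡ = [D/4; D/4, 3D/2]`, the four termination
times are `3D/4, 3D/4, 3D/2, 9D/4` (t¹ = t⁴ = 3D/4, t² = 3D/2, t³ = 9D/4), so
the expected termination time is `21D/16`. -/
theorem G1_strategy_value (D : ℝ) (hD : 0 < D) :
    termG1 D (fb D) (gb D) (D / 4) 1 (-1) = 3 * D / 4 ∧
    termG1 D (fb D) (gb D) (D / 4) 1 1 = 3 * D / 4 ∧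
    termG1 D (fb D) (gb D) (D / 4) (-1) (-1) = 3 * D / 2 ∧
    termG1 D (fb D) (gb D) (D / 4) (-1) 1 = 9 * D / 4 ∧
    (termG1 D (fb D) (gb D) (D / 4) 1 (-1) + termG1 D (fb D) (gb D) (D / 4) 1 1 +
     termG1 D (fb D) (gb D) (D / 4) (-1) (-1) + termG1 D (fb D) (gb D) (D / 4) (-1) 1) / 4
      = 21 * D / 16 := by
  have h1 : termG1 D (fb D) (gb D) (D / 4) 1 (-1) = 3 * D / 4 := by
    apply IsLeast.csInf_eq
    constructor
    · refine ⟨by linarith, Or.inr ⟨by linarith, ?_⟩⟩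
      unfold fb gb
      split_ifs <;> linarith
    · rintro t ⟨ht0, h | ⟨hτ, h⟩⟩ <;> unfold fb gb at h <;>
        split_ifs at h <;> linarith
  have h2 : termG1 D (fb D) (gb D) (D / 4) 1 1 = 3 * D / 4 := by
    apply IsLeast.csInf_eq
    constructor
    · refine ⟨by linarith, Or.inl ?_⟩
      unfold fb gb
      split_ifs <;> linarith
    · rintro t ⟨ht0, h | ⟨hτ, h⟩⟩ <;> unfold fb gb at h <;>
        split_ifs at h <;> linarith
  have h3 : termG1 D (fb D) (gb D) (D / 4) (-1) (-1) = 3 * D / 2 := by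
    apply IsLeast.csInf_eq
    constructor
    · refine ⟨by linarith, Or.inl ?_⟩
      unfold fb gb
      split_ifs <;> linarith
    · rintro t ⟨ht0, h | ⟨hτ, h⟩⟩ <;> unfold fb gb at h <;>
        split_ifs at h <;> linarith
  have h4 : termG1 D (fb D) (gb D) (D / 4) (-1) 1 = 9 * D / 4 := by
    apply IsLeast.csInf_eq
    constructor
    · refine ⟨by linarith, Or.inr ⟨by linarith, ?_⟩⟩
      unfold fb gb
      split_ifs <;> linarith
    · rintro t ⟨ht0, h | ⟨hτ, h⟩⟩ <;> unfold fb gb at h <;>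
        split_ifs at h <;> linarith
  refine ⟨h1, h2, h3, h4, ?_⟩
  rw [h1, h2, h3, h4]; ring
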